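/- Let f : ℝⁿ → ℝ be twice continuously differentiable with L₂-Lipschitz Hessian, let x ∈ ℝⁿ, g = ∇f(x), H = ∇²f(x). Let σ > 0 with σ ≤ σ_max, r > 0, C_up > 0, suppose H + σrI is invertible, and let s = −(H + σrI)⁻¹g satisfy ‖s‖ ≤ C_up r. Then ‖∇f(x+s)‖ ≤ C_up(L₂C_up/2 + σ_max) r²; equivalently r² ≥ 2‖∇f(x+s)‖ / (C_up(L₂C_up + 2σ_max)). -/

import Mathlib

/-!
Because `s` solves `(H + σr I) s = -g`, the gradient `∇f(x+s)` equals the first-order Taylor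
remainder `∇f(x+s) - g - Hs` of the gradient minus `σr s`. A Lipschitz Hessian bounds that
remainder by `(L₂/2)‖s‖²`, so `‖∇f(x+s)‖ ≤ (L₂/2)‖s‖² + σr‖s‖`, and `‖s‖ ≤ C_up r`,
`σ ≤ σ_max` finish the estimate.
-/

section TaylorRemainder

variable {E F : Type*} [NormedAddCommGroup E] [NormedSpace ℝ E]
  [NormedAddCommGroup F] [NormedSpace ℝ F]

theorem norm_sub_sub_fderiv_le_of_lipschitz_fderiv {G : E → F} (hG : Differentiable ℝ G)
    {L : ℝ} (hLip : ∀ y z : E, ‖fderiv ℝ G y - fderiv ℝ G z‖ ≤ L * ‖y - z‖) (x s : E) :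
    ‖G (x + s) - G x - fderiv ℝ G x s‖ ≤ L / 2 * ‖s‖ ^ 2 := by
  set φ : ℝ → F := fun t => G (x + t • s) - G x - t • fderiv ℝ G x s
  have hφ : ∀ t : ℝ, HasDerivAt φ (fderiv ℝ G (x + t • s) s - fderiv ℝ G x s) t := by
    intro t
    have hline : HasDerivAt (fun t : ℝ => x + t • s) s t := by
      simpa using ((hasDerivAt_id t).smul_const s).const_add x
    have hcomp := (hG (x + t • s)).hasFDerivAt.comp_hasDerivAt t hline
    have hφ_t := (hcomp.sub_const (G x)).sub ((hasDerivAt_id t).smul_const (fderiv ℝ G x s))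
    simp only [one_smul] at hφ_t
    exact hφ_t
  have hB : ∀ t : ℝ, HasDerivAt (fun t => L / 2 * ‖s‖ ^ 2 * t ^ 2) (L * ‖s‖ ^ 2 * t) t :=
    fun t => ((hasDerivAt_pow 2 t).const_mul (L / 2 * ‖s‖ ^ 2)).congr_deriv (by push_cast; ring)
  have hφ'_le : ∀ t ∈ Set.Ico (0 : ℝ) 1,
      ‖fderiv ℝ G (x + t • s) s - fderiv ℝ G x s‖ ≤ L * ‖s‖ ^ 2 * t := by
    rintro t ⟨ht, -⟩
    have hLip_t := hLip (x + t • s) x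
    rw [add_sub_cancel_left, norm_smul, Real.norm_of_nonneg ht] at hLip_t
    calc ‖fderiv ℝ G (x + t • s) s - fderiv ℝ G x s‖
        = ‖(fderiv ℝ G (x + t • s) - fderiv ℝ G x) s‖ := rfl
      _ ≤ ‖fderiv ℝ G (x + t • s) - fderiv ℝ G x‖ * ‖s‖ := ContinuousLinearMap.le_opNorm _ s
      _ ≤ L * (t * ‖s‖) * ‖s‖ := by gcongr
      _ = L * ‖s‖ ^ 2 * t := by ring
  have hφ_le := image_norm_le_of_norm_deriv_right_le_deriv_boundary
    (fun t _ => (hφ t).continuousAt.continuousWithinAt) (fun t _ => (hφ t).hasDerivWithinAt)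
    (by simp [φ]) hB hφ'_le (x := 1) (by norm_num)
  simpa [φ] using hφ_le

end TaylorRemainder

theorem ContDiff.differentiable_gradient {F : Type*} [NormedAddCommGroup F]
    [InnerProductSpace ℝ F] [CompleteSpace F] {f : F → ℝ} (hf : ContDiff ℝ 2 f) :
    Differentiable ℝ (gradient f) :=
  (InnerProductSpace.toDual ℝ F).symm.toContinuousLinearEquiv.differentiable.comp
    ((hf.fderiv_right (m := 1) (by norm_num)).differentiable one_ne_zero)

theorem norm_image_add_le_of_regularized_newton_step {E : Type*} [NormedAddCommGroup E]
    [NormedSpace ℝ E] {G : E → E} (hG : Differentiable ℝ G) {L c : ℝ}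
    (hLip : ∀ y z : E, ‖fderiv ℝ G y - fderiv ℝ G z‖ ≤ L * ‖y - z‖) {x s : E}
    (hs : fderiv ℝ G x s + c • s = -G x) :
    ‖G (x + s)‖ ≤ L / 2 * ‖s‖ ^ 2 + |c| * ‖s‖ := by
  have hsplit : G (x + s) = (G (x + s) - G x - fderiv ℝ G x s) - c • s := by
    linear_combination (norm := module) hs
  calc ‖G (x + s)‖ = ‖(G (x + s) - G x - fderiv ℝ G x s) - c • s‖ := congrArg _ hsplit
    _ ≤ ‖G (x + s) - G x - fderiv ℝ G x s‖ + ‖c • s‖ := norm_sub_le _ _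
    _ ≤ L / 2 * ‖s‖ ^ 2 + |c| * ‖s‖ := by
      rw [norm_smul, Real.norm_eq_abs]
      gcongr
      exact norm_sub_sub_fderiv_le_of_lipschitz_fderiv hG hLip x s

theorem gradient_bound_regularized_newton_general
    (n : ℕ) (f : EuclideanSpace ℝ (Fin n) → ℝ) (L₂ : ℝ) (hL₂ : 0 < L₂)
    (hf : ContDiff ℝ 2 f)
    (hLip : ∀ y z : EuclideanSpace ℝ (Fin n),
      ‖fderiv ℝ (gradient f) y - fderiv ℝ (gradient f) z‖ ≤ L₂ * ‖y - z‖)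
    (x : EuclideanSpace ℝ (Fin n))
    (σ σ_max r C_up : ℝ) (hσ : 0 < σ) (hσmax : σ ≤ σ_max) (hr : 0 < r) (hC : 0 < C_up)
    (s : EuclideanSpace ℝ (Fin n))
    (hs : fderiv ℝ (gradient f) x s + (σ * r) • s = -gradient f x)
    (hnorm : ‖s‖ ≤ C_up * r) :
    ‖gradient f (x + s)‖ ≤ C_up * (L₂ * C_up / 2 + σ_max) * r ^ 2 ∧
      r ^ 2 ≥ 2 * ‖gradient f (x + s)‖ / (C_up * (L₂ * C_up + 2 * σ_max)) := by
  have hstep := norm_image_add_le_of_regularized_newton_step hf.differentiable_gradient hLip hs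
  rw [abs_of_pos (mul_pos hσ hr)] at hstep
  have hσmax_pos : 0 < σ_max := hσ.trans_le hσmax
  have hbound : ‖gradient f (x + s)‖ ≤ C_up * (L₂ * C_up / 2 + σ_max) * r ^ 2 :=
    calc ‖gradient f (x + s)‖ ≤ L₂ / 2 * ‖s‖ ^ 2 + σ * r * ‖s‖ := hstep
      _ ≤ L₂ / 2 * (C_up * r) ^ 2 + σ_max * r * (C_up * r) := by gcongr
      _ = C_up * (L₂ * C_up / 2 + σ_max) * r ^ 2 := by ring
  refine ⟨hbound, ?_⟩
  rw [ge_iff_le, div_le_iff₀ (by positivity)]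
  linarith

/-- Gradient bound after a regularized Newton step: if `H + σrI` is invertible and
`s = -(H + σrI)⁻¹g` satisfies `‖s‖ ≤ C_up r`, with `0 < σ ≤ σ_max`, then
`‖∇f(x+s)‖ ≤ C_up(L₂C_up/2 + σ_max)r²`, equivalently
`r² ≥ 2‖∇f(x+s)‖/(C_up(L₂C_up + 2σ_max))`. -/
theorem gradient_bound_regularized_newton
    (n : ℕ) (f : EuclideanSpace ℝ (Fin n) → ℝ) (L₂ : ℝ) (hL₂ : 0 < L₂)
    (hf : ContDiff ℝ 2 f)
    (hLip : ∀ y z : EuclideanSpace ℝ (Fin n),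
      ‖fderiv ℝ (gradient f) y - fderiv ℝ (gradient f) z‖ ≤ L₂ * ‖y - z‖)
    (x : EuclideanSpace ℝ (Fin n))
    (σ σ_max r C_up : ℝ) (hσ : 0 < σ) (hσmax : σ ≤ σ_max) (hr : 0 < r) (hC : 0 < C_up)
    (hinv : Function.Bijective
      (fun v : EuclideanSpace ℝ (Fin n) => fderiv ℝ (gradient f) x v + (σ * r) • v))
    (s : EuclideanSpace ℝ (Fin n))
    (hs : fderiv ℝ (gradient f) x s + (σ * r) • s = -gradient f x)
    (hnorm : ‖s‖ ≤ C_up * r) :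
    ‖gradient f (x + s)‖ ≤ C_up * (L₂ * C_up / 2 + σ_max) * r ^ 2 ∧
      r ^ 2 ≥ 2 * ‖gradient f (x + s)‖ / (C_up * (L₂ * C_up + 2 * σ_max)) :=
  gradient_bound_regularized_newton_general n f L₂ hL₂ hf hLip x σ σ_max r C_up hσ hσmax hr hC s hs
    hnorm
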